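/- Let R be an arithmetical ring with Jacobson radical M and let I be a proper ideal of R with I ≠ M². Then I is a 1-absorbing δ-primary ideal of R if and only if I is a δ-primary ideal of R. -/

import Mathlib

/-!
Only the forward implication needs an argument. Suppose `a * b ∈ I` with `a ∉ I` and
`b ∉ δ I`. Applying the 1-absorbing condition to `a * c * b` shows `a * c ∈ I` for every
nonunit `c`, so the proper ideal `(I : a)` contains all nonunits and `R` must be local;
being arithmetical, it is then chained. In a chained local ring with maximal ideal `M`, the
1-absorbing condition forces `M ≤ (a)`, whence `M² ≤ a M ≤ I`, while `b ∈ M \ I` forces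
`I ≤ b M ≤ M²`. So `I = M²`, and `M` is the Jacobson radical.
-/

open Ideal

/-- `δ` is an expansion function of the ideals of `R`. -/
def ExpansionFunction (R : Type*) [CommRing R] (δ : Ideal R → Ideal R) : Prop :=
  (∀ I : Ideal R, I ≤ δ I) ∧ ∀ I J : Ideal R, J ≤ I → δ J ≤ δ I

/-- A proper ideal `I` of `R` is 1-absorbing δ-primary if whenever nonunit elements
`a, b, c` satisfy `a * b * c ∈ I`, then `a * b ∈ I` or `c ∈ δ I`. -/
def IsOneAbsDeltaPrimary {R : Type*} [CommRing R] (δ : Ideal R → Ideal R) (I : Ideal R) : Prop :=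
  I ≠ ⊤ ∧ ∀ a b c : R, ¬ IsUnit a → ¬ IsUnit b → ¬ IsUnit c →
    a * b * c ∈ I → a * b ∈ I ∨ c ∈ δ I

/-- A proper ideal `I` of `R` is δ-primary if whenever `a * b ∈ I`,
then `a ∈ I` or `b ∈ δ I`. -/
def IsDeltaPrimary {R : Type*} [CommRing R] (δ : Ideal R → Ideal R) (I : Ideal R) : Prop :=
  I ≠ ⊤ ∧ ∀ a b : R, a * b ∈ I → a ∈ I ∨ b ∈ δ I

/-- A proper ideal `I` of `R` is δ-semiprimary if whenever `a * b ∈ I`,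
then `a ∈ δ I` or `b ∈ δ I`. -/
def IsDeltaSemiprimary {R : Type*} [CommRing R] (δ : Ideal R → Ideal R) (I : Ideal R) : Prop :=
  I ≠ ⊤ ∧ ∀ a b : R, a * b ∈ I → a ∈ δ I ∨ b ∈ δ I

/-- A proper ideal `I` of `R` is 1-absorbing prime if whenever nonunit elements
`a, b, c` satisfy `a * b * c ∈ I`, then `a * b ∈ I` or `c ∈ I`. -/
def IsOneAbsPrime {R : Type*} [CommRing R] (I : Ideal R) : Prop :=
  I ≠ ⊤ ∧ ∀ a b c : R, ¬ IsUnit a → ¬ IsUnit b → ¬ IsUnit c →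
    a * b * c ∈ I → a * b ∈ I ∨ c ∈ I

open IsLocalRing

section

variable {R : Type*} [CommRing R]

theorem IsDeltaPrimary.isOneAbsDeltaPrimary {δ : Ideal R → Ideal R} {I : Ideal R}
    (hI : IsDeltaPrimary δ I) : IsOneAbsDeltaPrimary δ I :=
  ⟨hI.1, fun a b c _ _ _ habc => hI.2 (a * b) c habc⟩

theorem IsLocalRing.of_forall_not_isUnit_mem {J : Ideal R} (hJ : J ≠ ⊤)
    (h : ∀ c : R, ¬IsUnit c → c ∈ J) : IsLocalRing R :=
  have : Nontrivial R :=
    nontrivial_of_ne 0 1 fun h01 => hJ (J.eq_top_iff_one.2 (h01 ▸ J.zero_mem))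
  .of_nonunits_add fun u v hu hv hunit =>
    hJ (J.eq_top_of_isUnit_mem (J.add_mem (h u hu) (h v hv)) hunit)

theorem Ideal.le_total_of_bijective {S : Type*} [CommRing S] {f : R →+* S}
    (hf : Function.Bijective f) (hS : ∀ J K : Ideal S, J ≤ K ∨ K ≤ J) (J K : Ideal R) :
    J ≤ K ∨ K ≤ J := by
  let e := (relIsoOfBijective f hf).symm
  simpa only [e.le_iff_le] using hS (e J) (e K)

theorem IsLocalRing.le_total_of_le_total_localization [IsLocalRing R]
    (h : ∀ J K : Ideal (Localization.AtPrime (maximalIdeal R)), J ≤ K ∨ K ≤ J)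
    (J K : Ideal R) : J ≤ K ∨ K ≤ J :=
  le_total_of_bijective (IsLocalization.atUnits R (maximalIdeal R).primeCompl
    (S := Localization.AtPrime (maximalIdeal R)) fun _ hs => notMem_maximalIdeal.1 hs).bijective
    h J K

theorem IsLocalRing.le_maximalIdeal_sq [IsLocalRing R] (hR : ∀ J K : Ideal R, J ≤ K ∨ K ≤ J)
    {I : Ideal R} {b : R} (hb : b ∈ maximalIdeal R) (hbI : b ∉ I) :
    I ≤ maximalIdeal R ^ 2 := by
  have hIb : I ≤ span {b} :=
    (hR I (span {b})).resolve_right fun h => hbI (h (mem_span_singleton_self b))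
  intro t ht
  obtain ⟨u, rfl⟩ := mem_span_singleton'.1 (hIb ht)
  have hu : u ∈ maximalIdeal R := fun h => hbI ((I.unit_mul_mem_iff_mem h).1 ht)
  exact sq (maximalIdeal R) ▸ mul_mem_mul hu hb

section OneAbsDeltaPrimary

variable {δ : Ideal R → Ideal R} {I : Ideal R} {a b : R}

theorem IsOneAbsDeltaPrimary.mul_mem_of_not_isUnit (hI : IsOneAbsDeltaPrimary δ I)
    (hδI : I ≤ δ I) (hab : a * b ∈ I) (ha : a ∉ I) (hb : b ∉ δ I) {c : R} (hc : ¬IsUnit c) :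
    a * c ∈ I := by
  have hau : ¬IsUnit a := fun h => hb (hδI ((I.unit_mul_mem_iff_mem h).1 hab))
  have hbu : ¬IsUnit b := fun h => ha ((I.mul_unit_mem_iff_mem h).1 hab)
  refine (hI.2 a c b hau hc hbu ?_).resolve_right hb
  rw [mul_right_comm]
  exact I.mul_mem_right c hab

theorem IsOneAbsDeltaPrimary.isLocalRing (hI : IsOneAbsDeltaPrimary δ I) (hδI : I ≤ δ I)
    (hab : a * b ∈ I) (ha : a ∉ I) (hb : b ∉ δ I) : IsLocalRing R := by
  refine .of_forall_not_isUnit_mem (J := I.colon {a}) (fun h => ha ?_) fun c hc => ?_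
  · simpa using (I.colon {a}).eq_top_iff_one.1 h
  · simpa [mul_comm] using hI.mul_mem_of_not_isUnit hδI hab ha hb hc

theorem IsOneAbsDeltaPrimary.maximalIdeal_le_span_singleton [IsLocalRing R]
    (hR : ∀ J K : Ideal R, J ≤ K ∨ K ≤ J) (hI : IsOneAbsDeltaPrimary δ I)
    (hab : a * b ∈ I) (ha : a ∉ I) (hb : b ∉ δ I) (hbu : ¬IsUnit b) :
    maximalIdeal R ≤ span {a} := by
  intro x hx
  rcases hR (span {x}) (span {a}) with h | h
  · exact h (mem_span_singleton_self x)
  obtain ⟨r, rfl⟩ := mem_span_singleton'.1 (h (mem_span_singleton_self a))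
  by_cases hr : IsUnit r
  · exact span_singleton_mul_left_unit hr x ▸ mem_span_singleton_self x
  · exact ((hI.2 r x b hr hx hbu hab).elim ha hb).elim

theorem IsOneAbsDeltaPrimary.eq_maximalIdeal_sq [IsLocalRing R]
    (hR : ∀ J K : Ideal R, J ≤ K ∨ K ≤ J) (hI : IsOneAbsDeltaPrimary δ I) (hδI : I ≤ δ I)
    (hab : a * b ∈ I) (ha : a ∉ I) (hb : b ∉ δ I) : I = maximalIdeal R ^ 2 := by
  have hbu : ¬IsUnit b := fun h => ha ((I.mul_unit_mem_iff_mem h).1 hab)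
  refine le_antisymm (le_maximalIdeal_sq hR hbu fun h => hb (hδI h)) ?_
  calc maximalIdeal R ^ 2 = maximalIdeal R * maximalIdeal R := sq _
    _ ≤ span {a} * maximalIdeal R :=
      mul_mono_left (hI.maximalIdeal_le_span_singleton hR hab ha hb hbu)
    _ ≤ I := span_singleton_mul_le_iff.2 fun _ hc => hI.mul_mem_of_not_isUnit hδI hab ha hb hc

end OneAbsDeltaPrimary

end

theorem arithmetical_one_abs_delta_primary_iff_delta_primary_general
    {R : Type*} [CommRing R]
    (harith : ∀ (P : Ideal R) (hP : P.IsMaximal),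
      ∀ I J : Ideal (@Localization.AtPrime R _ P hP.isPrime), I ≤ J ∨ J ≤ I)
    (δ : Ideal R → Ideal R) (hδ : ExpansionFunction R δ)
    (I : Ideal R)
    (hne : I ≠ ((⊥ : Ideal R).jacobson) ^ 2) :
    IsOneAbsDeltaPrimary δ I ↔ IsDeltaPrimary δ I := by
  refine ⟨fun hI => ⟨hI.1, fun a b hab => ?_⟩, IsDeltaPrimary.isOneAbsDeltaPrimary⟩
  by_contra! ⟨ha, hb⟩
  have hδI := hδ.1 I
  have := hI.isLocalRing hδI hab ha hb
  have hR := le_total_of_le_total_localization (harith _ (maximalIdeal.isMaximal R))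
  apply hne
  rw [jacobson_eq_maximalIdeal ⊥ bot_ne_top]
  exact hI.eq_maximalIdeal_sq hR hδI hab ha hb

theorem arithmetical_one_abs_delta_primary_iff_delta_primary
    {R : Type*} [CommRing R] [Nontrivial R]
    (harith : ∀ (P : Ideal R) (hP : P.IsMaximal),
      ∀ I J : Ideal (@Localization.AtPrime R _ P hP.isPrime), I ≤ J ∨ J ≤ I)
    (δ : Ideal R → Ideal R) (hδ : ExpansionFunction R δ)
    (I : Ideal R) (hIproper : I ≠ ⊤)
    (hne : I ≠ ((⊥ : Ideal R).jacobson) ^ 2) :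
    IsOneAbsDeltaPrimary δ I ↔ IsDeltaPrimary δ I :=
  arithmetical_one_abs_delta_primary_iff_delta_primary_general harith δ hδ I hne
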